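/- Any shortest valid path in the marked cycle has at most 2 turns, and if it has exactly 2 turns then it is of the form c^i b a^j d c^l or a^i d c^j b a^l with k−1 > j > i ≥ 1 and 1 ≤ l ≤ j − i. -/

import Mathlib

/-- The four move types in the marked cycle. -/
inductive Move : Type
  | a | b | c | d
deriving DecidableEq

/-- Where a move from node `x` in `ZMod k` leads. -/
def Move.step {k : ℕ} (x : ZMod k) : Move → ZMod k
  | .a => x - 1
  | .b => x
  | .c => x + 1
  | .d => x

/-- The node covered by a move performed from node `x`. -/
def Move.covers {k : ℕ} (x : ZMod k) : Move → ZMod k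
  | .a => x - 1
  | .b => x
  | .c => x
  | .d => x - 1

/-- The node reached after performing a sequence of moves starting at `s`. -/
def endAt {k : ℕ} (s : ZMod k) : List Move → ZMod k
  | [] => s
  | m :: ms => endAt (Move.step s m) ms

/-- The set of nodes covered by a sequence of moves starting at `s`. -/
def coveredSet {k : ℕ} (s : ZMod k) : List Move → Set (ZMod k)
  | [] => ∅
  | m :: ms => insert (Move.covers s m) (coveredSet (Move.step s m) ms)

/-- A valid path in the marked cycle on `ZMod k` with marked set `B`, start `s`,
end `t`: a nonempty sequence of moves from `s` to `t` covering every node of `B`. -/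
def ValidPath {k : ℕ} (B : Set (ZMod k)) (s t : ZMod k) (p : List Move) : Prop :=
  p ≠ [] ∧ endAt s p = t ∧ B ⊆ coveredSet s p

/-- A shortest valid path: valid and of minimum length among all valid paths. -/
def ShortestPath {k : ℕ} (B : Set (ZMod k)) (s t : ZMod k) (p : List Move) : Prop :=
  ValidPath B s t p ∧ ∀ q : List Move, ValidPath B s t q → p.length ≤ q.length

/-- The number of turns (a-turns `cba` and c-turns `adc`) in a path. -/
def turnCount (p : List Move) : ℕ :=
  ((List.range p.length).filter (fun i =>
    (p.drop i).take 3 = [Move.c, Move.b, Move.a] ∨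
    (p.drop i).take 3 = [Move.a, Move.d, Move.c])).length

/-!
A factor of a shortest path can never be replaced by a shorter word that, from the same node,
ends at the same node and covers at least the same nodes. Forbidding the factors `ca`, `cd`,
`bb`, `bc`, `cbd`, `bdc` and `b aʲ d cᵐ b` forces a shortest path, up to the reflection
`x ↦ -x` of the cycle (which swaps `a ↔ c`, `b ↔ d` and preserves turns), into one of the shapes
`cⁿ`, `cⁱ b aʲ`, `b d`, `cⁱ b aʲ d cˡ` with `j ≥ 1`. Only the last can have two turns, namely when
`i, l ≥ 1`. Four explicit shortcuts of `cⁱ b aʲ d cˡ` rule out `j < i + l`, and when `j + 1 ≥ k`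
the `d`-move can be dropped, since the `a`-run already winds around the cycle.

Names such as `cbadc` spell the word `cⁱ b aʲ d cˡ` with its runs collapsed.
-/

def Move.mirror : Move → Move
  | .a => .c
  | .b => .d
  | .c => .a
  | .d => .b

@[simp]
def Move.shift : Move → ℤ
  | .a => -1
  | .b => 0
  | .c => 1
  | .d => 0

@[simp]
def Move.offset : Move → ℤ
  | .a => -1
  | .b => 0
  | .c => 0
  | .d => -1

-- The walk lifted to `ℤ` and started at `0`: its end point and the set of nodes it covers.
def displacement (w : List Move) : ℤ := (w.map Move.shift).sum

def footprint : List Move → Set ℤ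
  | [] => ∅
  | m :: w => insert m.offset ((m.shift + ·) '' footprint w)

@[simp] theorem Move.mirror_mirror (m : Move) : m.mirror.mirror = m := by
  cases m <;> rfl

@[simp] theorem Move.mirror_comp_mirror : Move.mirror ∘ Move.mirror = id :=
  funext Move.mirror_mirror

theorem map_mirror_eq_iff {p q : List Move} : p.map Move.mirror = q ↔ p = q.map Move.mirror := by
  constructor <;> rintro rfl <;> simp

@[simp] theorem displacement_nil : displacement [] = 0 := rfl

@[simp] theorem displacement_cons (m : Move) (w : List Move) :
    displacement (m :: w) = m.shift + displacement w := by
  simp [displacement]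

@[simp] theorem displacement_append (u v : List Move) :
    displacement (u ++ v) = displacement u + displacement v := by
  simp [displacement]

@[simp] theorem displacement_replicate (n : ℕ) (m : Move) :
    displacement (List.replicate n m) = n * m.shift := by
  simp [displacement]

@[simp] theorem footprint_nil : footprint [] = ∅ := rfl

@[simp] theorem footprint_cons (m : Move) (w : List Move) :
    footprint (m :: w) = insert m.offset ((m.shift + ·) '' footprint w) := rfl

@[simp] theorem footprint_append (u v : List Move) :
    footprint (u ++ v) = footprint u ∪ (displacement u + ·) '' footprint v := by
  induction u with
  | nil => simp
  | cons m u ih =>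
    simp only [List.cons_append, footprint_cons, ih, Set.image_union, Set.image_image,
      Set.insert_union, displacement_cons, add_assoc]

@[simp] theorem footprint_replicate_c (n : ℕ) :
    footprint (List.replicate n .c) = Set.Ico 0 (n : ℤ) := by
  induction n with
  | zero => simp
  | succ n ih =>
    ext y
    simp [List.replicate_succ, ih]
    omega

@[simp] theorem footprint_replicate_a (n : ℕ) :
    footprint (List.replicate n .a) = Set.Ico (-(n : ℤ)) 0 := by
  induction n with
  | zero => simp
  | succ n ih =>
    ext y
    simp [List.replicate_succ, ih]
    omega

section Walk

variable {k : ℕ}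

@[simp] theorem endAt_nil (x : ZMod k) : endAt x [] = x := rfl

@[simp] theorem endAt_cons (x : ZMod k) (m : Move) (w : List Move) :
    endAt x (m :: w) = endAt (Move.step x m) w := rfl

@[simp] theorem coveredSet_nil (x : ZMod k) : coveredSet x [] = ∅ := rfl

@[simp] theorem coveredSet_cons (x : ZMod k) (m : Move) (w : List Move) :
    coveredSet x (m :: w) = insert (Move.covers x m) (coveredSet (Move.step x m) w) := rfl

theorem endAt_append (x : ZMod k) (u v : List Move) :
    endAt x (u ++ v) = endAt (endAt x u) v := by
  induction u generalizing x with
  | nil => rfl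
  | cons m u ih => exact ih _

theorem coveredSet_append (x : ZMod k) (u v : List Move) :
    coveredSet x (u ++ v) = coveredSet x u ∪ coveredSet (endAt x u) v := by
  induction u generalizing x with
  | nil => simp
  | cons m u ih => simp [ih, Set.insert_union]

theorem Move.step_eq_add_shift (x : ZMod k) (m : Move) : Move.step x m = x + m.shift := by
  cases m <;> simp [Move.step, sub_eq_add_neg]

theorem Move.covers_eq_add_offset (x : ZMod k) (m : Move) : Move.covers x m = x + m.offset := by
  cases m <;> simp [Move.covers, sub_eq_add_neg]

theorem endAt_eq_add_displacement (x : ZMod k) (w : List Move) :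
    endAt x w = x + displacement w := by
  induction w generalizing x with
  | nil => simp
  | cons m w ih => simp [ih, Move.step_eq_add_shift, add_assoc]

theorem coveredSet_eq_image_footprint (x : ZMod k) (w : List Move) :
    coveredSet x w = (fun z : ℤ => x + z) '' footprint w := by
  induction w generalizing x with
  | nil => simp
  | cons m w ih =>
    rw [coveredSet_cons, ih, footprint_cons, Set.image_insert_eq, Set.image_image]
    simp [Move.step_eq_add_shift, Move.covers_eq_add_offset, add_assoc]

theorem Move.step_mirror (x : ZMod k) (m : Move) :
    Move.step (-x) m.mirror = -Move.step x m := by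
  cases m <;> simp [Move.step, Move.mirror] <;> ring

theorem Move.covers_mirror (x : ZMod k) (m : Move) :
    Move.covers (-x) m.mirror = -Move.covers x m - 1 := by
  cases m <;> simp [Move.covers, Move.mirror]

theorem endAt_map_mirror (x : ZMod k) (w : List Move) :
    endAt (-x) (w.map Move.mirror) = -endAt x w := by
  induction w generalizing x with
  | nil => rfl
  | cons m w ih => simp [Move.step_mirror, ih]

theorem coveredSet_map_mirror (x : ZMod k) (w : List Move) :
    coveredSet (-x) (w.map Move.mirror) = (fun y => -y - 1) '' coveredSet x w := by
  induction w generalizing x with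
  | nil => simp
  | cons m w ih => simp [Move.step_mirror, Move.covers_mirror, ih, Set.image_insert_eq]

end Walk

def HasShortcut (k : ℕ) (w : List Move) : Prop :=
  ∀ x : ZMod k, ∃ w' : List Move, w'.length < w.length ∧ endAt x w' = endAt x w ∧
    coveredSet x w ⊆ coveredSet x w'

def ShortcutFree (k : ℕ) (p : List Move) : Prop :=
  ∀ w, w <:+: p → ¬ HasShortcut k w

section Shortcuts

variable {k : ℕ}

theorem ShortestPath.shortcutFree {B : Set (ZMod k)} {s t : ZMod k} {p : List Move}
    (hp : ShortestPath B s t p) : ShortcutFree k p := by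
  rintro w ⟨u, v, rfl⟩ hw
  obtain ⟨⟨-, hend, hcov⟩, hmin⟩ := hp
  obtain ⟨w', hlen, hend', hcov'⟩ := hw (endAt s u)
  have hw' : w' ≠ [] := by
    rintro rfl
    cases w with
    | nil => simp at hlen
    | cons m w => simpa using hcov' (Set.mem_insert _ _)
  have hvalid : ValidPath B s t (u ++ w' ++ v) := by
    refine ⟨by simp [hw'], by simpa [endAt_append, hend'] using hend, hcov.trans ?_⟩
    simp only [coveredSet_append, endAt_append, hend']
    gcongr
  have := hmin _ hvalid
  simp only [List.length_append] at this
  omega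

theorem ShortcutFree.of_cons {m : Move} {p : List Move} (hp : ShortcutFree k (m :: p)) :
    ShortcutFree k p :=
  fun w hw => hp w (hw.trans (List.suffix_cons m p).isInfix)

theorem ShortcutFree.not_hasShortcut_of_prefix {p u : List Move} (hp : ShortcutFree k p)
    (hu : u <+: p) : ¬ HasShortcut k u :=
  hp u hu.isInfix

theorem HasShortcut.map_mirror {w : List Move} (hw : HasShortcut k w) :
    HasShortcut k (w.map Move.mirror) := by
  intro x
  obtain ⟨w', hlen, hend, hcov⟩ := hw (-x)
  refine ⟨w'.map Move.mirror, by simpa using hlen, ?_, ?_⟩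
  · rw [← neg_neg x, endAt_map_mirror, endAt_map_mirror, hend]
  · rw [← neg_neg x, coveredSet_map_mirror, coveredSet_map_mirror]
    exact Set.image_mono hcov

theorem ShortcutFree.map_mirror {p : List Move} (hp : ShortcutFree k p) :
    ShortcutFree k (p.map Move.mirror) :=
  fun w hw hw' => hp _ (by simpa using hw.map Move.mirror) hw'.map_mirror

theorem hasShortcut_of_footprint {w w' : List Move} (hlen : w'.length < w.length)
    (hdisp : (displacement w' : ZMod k) = displacement w)
    (hcov : ∀ y ∈ footprint w, ∃ y' ∈ footprint w', (y : ZMod k) = y') :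
    HasShortcut k w := by
  intro x
  refine ⟨w', hlen, by simp [endAt_eq_add_displacement, hdisp], ?_⟩
  rw [coveredSet_eq_image_footprint, coveredSet_eq_image_footprint]
  rintro _ ⟨y, hy, rfl⟩
  obtain ⟨y', hy', hyy'⟩ := hcov y hy
  exact ⟨y', hy', by simp [hyy']⟩

theorem hasShortcut_of_footprint_subset {w w' : List Move} (hlen : w'.length < w.length)
    (hdisp : displacement w' = displacement w) (hsub : footprint w ⊆ footprint w') :
    HasShortcut k w :=
  hasShortcut_of_footprint hlen (by rw [hdisp]) fun y hy => ⟨y, hsub hy, rfl⟩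

theorem hasShortcut_ca : HasShortcut k [.c, .a] :=
  hasShortcut_of_footprint_subset (w' := [.b]) (by simp) rfl (by simp)

theorem hasShortcut_cd : HasShortcut k [.c, .d] :=
  hasShortcut_of_footprint_subset (w' := [.c]) (by simp) rfl (by simp)

theorem hasShortcut_bb : HasShortcut k [.b, .b] :=
  hasShortcut_of_footprint_subset (w' := [.b]) (by simp) rfl (by simp)

theorem hasShortcut_bc : HasShortcut k [.b, .c] :=
  hasShortcut_of_footprint_subset (w' := [.c]) (by simp) rfl (by simp)

theorem hasShortcut_cbd : HasShortcut k [.c, .b, .d] :=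
  hasShortcut_of_footprint_subset (w' := [.c, .b]) (by simp) rfl (fun y => by simp; omega)

theorem hasShortcut_bdc : HasShortcut k [.b, .d, .c] :=
  hasShortcut_of_footprint_subset (w' := [.d, .c]) (by simp) rfl (by simp)

theorem hasShortcut_badcb (j m : ℕ) :
    HasShortcut k ([.b] ++ List.replicate j .a ++ [.d] ++ List.replicate m .c ++ [.b]) := by
  rcases le_or_gt m j with hmj | hjm
  · refine hasShortcut_of_footprint_subset
      (w' := [.b] ++ List.replicate j .a ++ [.d] ++ List.replicate m .c) (by simp) (by simp) ?_
    intro y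
    simp
    omega
  · refine hasShortcut_of_footprint_subset
      (w' := List.replicate j .a ++ [.d] ++ List.replicate m .c ++ [.b]) (by simp) (by simp) ?_
    intro y
    simp
    omega

theorem hasShortcut_cbadc_of_lt {i j l : ℕ} (h : j < i + l) :
    HasShortcut k (List.replicate i .c ++ [.b] ++ List.replicate j .a ++ [.d] ++
      List.replicate l .c) := by
  rcases le_or_gt i j with hij | hji <;> rcases le_or_gt l j with hlj | hjl
  · refine hasShortcut_of_footprint_subset (w' := List.replicate (j - i) .a ++ [.d] ++
      List.replicate j .c ++ [.b] ++ List.replicate (j - l) .a) (by simp; omega) ?_ ?_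
    · simp; omega
    · intro y; simp; omega
  · refine hasShortcut_of_footprint_subset
      (w' := List.replicate (j - i) .a ++ [.d] ++ List.replicate l .c) (by simp; omega) ?_ ?_
    · simp; omega
    · intro y; simp; omega
  · refine hasShortcut_of_footprint_subset
      (w' := List.replicate i .c ++ [.b] ++ List.replicate (j - l) .a) (by simp; omega) ?_ ?_
    · simp; omega
    · intro y; simp; omega
  · refine hasShortcut_of_footprint_subset
      (w' := List.replicate (i + l - j) .c) (by simp; omega) ?_ ?_
    · simp; omega
    · intro y; simp; omega

theorem hasShortcut_cbadc_of_le {i j l : ℕ} (hk : 0 < k) (h : k ≤ j + 1) :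
    HasShortcut k (List.replicate i .c ++ [.b] ++ List.replicate j .a ++ [.d] ++
      List.replicate l .c) := by
  refine hasShortcut_of_footprint (w' := List.replicate i .c ++ [.b] ++ List.replicate j .a ++
      List.replicate l .c) (by simp) (by simp) ?_
  intro y hy
  by_cases hy' : y ∈ footprint (List.replicate i .c ++ [.b] ++ List.replicate j .a ++
      List.replicate l .c)
  · exact ⟨y, hy', rfl⟩
  · -- `y = i - j - 1` is covered only by the `d`-move, and `y + k` lies in the `a`-run or is `i`.
    refine ⟨y + k, ?_, by simp⟩
    simp at hy hy' ⊢
    omega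

end Shortcuts

@[simp] theorem turnCount_nil : turnCount [] = 0 := rfl

theorem turnCount_cons (m : Move) (q : List Move) :
    turnCount (m :: q) = turnCount q + if ((m :: q).take 3 = [Move.c, Move.b, Move.a] ∨
      (m :: q).take 3 = [Move.a, Move.d, Move.c]) then 1 else 0 := by
  unfold turnCount
  rw [List.length_cons, List.range_succ_eq_map, List.filter_cons, List.filter_map]
  simp only [Function.comp_def, List.drop_succ_cons, List.drop_zero]
  by_cases h : (m :: q).take 3 = [Move.c, Move.b, Move.a] ∨
    (m :: q).take 3 = [Move.a, Move.d, Move.c] <;> simp only [h] <;> simp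

@[simp] theorem turnCount_b_cons (q : List Move) : turnCount (.b :: q) = turnCount q := by
  simp [turnCount_cons]

@[simp] theorem turnCount_d_cons (q : List Move) : turnCount (.d :: q) = turnCount q := by
  simp [turnCount_cons]

theorem turnCount_cons_replicate_append (n : ℕ) (m : Move) (q : List Move) :
    turnCount (m :: (List.replicate n m ++ q)) = turnCount (m :: q) := by
  induction n with
  | zero => rfl
  | succ n ih =>
    rw [List.replicate_succ, List.cons_append, turnCount_cons, ih]
    cases m <;> simp

theorem turnCount_replicate_append (n : ℕ) (m : Move) (q : List Move) :
    turnCount (List.replicate n m ++ q) = turnCount q + if 0 < n ∧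
      ((m :: q).take 3 = [Move.c, Move.b, Move.a] ∨
        (m :: q).take 3 = [Move.a, Move.d, Move.c]) then 1 else 0 := by
  rcases n with _ | n
  · simp
  · rw [List.replicate_succ, List.cons_append, turnCount_cons_replicate_append, turnCount_cons]
    simp

theorem turnCount_replicate (n : ℕ) (m : Move) : turnCount (List.replicate n m) = 0 := by
  simpa using turnCount_replicate_append n m []

theorem turnCount_cba_le (i j : ℕ) :
    turnCount (List.replicate i .c ++ [.b] ++ List.replicate j .a) ≤ 1 := by
  rw [List.append_assoc, turnCount_replicate_append, List.singleton_append, turnCount_b_cons,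
    turnCount_replicate]
  split_ifs <;> simp

theorem turnCount_cbadc (i j l : ℕ) (hj : 0 < j) :
    turnCount (List.replicate i .c ++ [.b] ++ List.replicate j .a ++ [.d] ++
      List.replicate l .c) = (if 0 < i then 1 else 0) + (if 0 < l then 1 else 0) := by
  rw [show List.replicate i Move.c ++ [Move.b] ++ List.replicate j Move.a ++ [Move.d] ++
      List.replicate l Move.c = List.replicate i Move.c ++
        Move.b :: (List.replicate j Move.a ++ Move.d :: List.replicate l Move.c) by simp,
    turnCount_replicate_append, turnCount_b_cons, turnCount_replicate_append, turnCount_d_cons,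
    turnCount_replicate]
  obtain ⟨j, rfl⟩ := Nat.exists_eq_add_of_lt hj
  rcases l with _ | l <;> simp [List.replicate_succ, add_comm]

theorem turnCount_map_mirror (p : List Move) : turnCount (p.map Move.mirror) = turnCount p := by
  unfold turnCount
  simp only [List.length_map, ← List.map_drop, ← List.map_take, map_mirror_eq_iff]
  simp [Move.mirror, or_comm]

-- The shapes of shortest paths beginning with `c` or `b`; the others are their mirror images.
def IsCanonical (p : List Move) : Prop :=
  (∃ n, p = List.replicate n .c) ∨
  (∃ i j, p = List.replicate i .c ++ [.b] ++ List.replicate j .a) ∨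
  p = [.b, .d] ∨
  (∃ i j l, 0 < j ∧
    p = List.replicate i .c ++ [.b] ++ List.replicate j .a ++ [.d] ++ List.replicate l .c)

namespace IsCanonical

variable {k : ℕ} {p q : List Move}

theorem eq_nil_or_head (hp : IsCanonical p) :
    p = [] ∨ (∃ q, p = .c :: q) ∨ ∃ q, p = .b :: q := by
  rcases hp with ⟨n, rfl⟩ | ⟨i, j, rfl⟩ | rfl | ⟨i, j, l, -, rfl⟩
  · cases n <;> simp [List.replicate_succ]
  · cases i <;> simp [List.replicate_succ]
  · simp
  · cases i <;> simp [List.replicate_succ]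

theorem mirror_eq_nil_or_head (hp : IsCanonical (p.map Move.mirror)) :
    p = [] ∨ (∃ q, p = .a :: q) ∨ ∃ q, p = .d :: q := by
  rcases hp.eq_nil_or_head with h | ⟨q, h⟩ | ⟨q, h⟩ <;> rw [map_mirror_eq_iff] at h
  · simp [h]
  · exact Or.inr (Or.inl ⟨_, h⟩)
  · exact Or.inr (Or.inr ⟨_, h⟩)

theorem cons_c (hq : IsCanonical q ∨ IsCanonical (q.map Move.mirror))
    (hfree : ShortcutFree k (.c :: q)) : IsCanonical (.c :: q) := by
  rcases hq with (⟨n, rfl⟩ | ⟨i, j, rfl⟩ | rfl | ⟨i, j, l, hj, rfl⟩) | hq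
  · exact Or.inl ⟨n + 1, rfl⟩
  · exact Or.inr (Or.inl ⟨i + 1, j, rfl⟩)
  · exact (hfree.not_hasShortcut_of_prefix ⟨[], rfl⟩ hasShortcut_cbd).elim
  · exact Or.inr (Or.inr (Or.inr ⟨i + 1, j, l, hj, rfl⟩))
  · rcases hq.mirror_eq_nil_or_head with rfl | ⟨r, rfl⟩ | ⟨r, rfl⟩
    · exact Or.inl ⟨1, rfl⟩
    · exact (hfree.not_hasShortcut_of_prefix ⟨r, rfl⟩ hasShortcut_ca).elim
    · exact (hfree.not_hasShortcut_of_prefix ⟨r, rfl⟩ hasShortcut_cd).elim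

theorem cons_b (hq : IsCanonical q ∨ IsCanonical (q.map Move.mirror))
    (hfree : ShortcutFree k (.b :: q)) : IsCanonical (.b :: q) := by
  rcases hq with hq | hq
  · rcases hq.eq_nil_or_head with rfl | ⟨r, rfl⟩ | ⟨r, rfl⟩
    · exact Or.inr (Or.inl ⟨0, 0, rfl⟩)
    · exact (hfree.not_hasShortcut_of_prefix ⟨r, rfl⟩ hasShortcut_bc).elim
    · exact (hfree.not_hasShortcut_of_prefix ⟨r, rfl⟩ hasShortcut_bb).elim
  rcases hq with ⟨n, h⟩ | ⟨i, j, h⟩ | h | ⟨i, j, l, hj, h⟩ <;>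
    simp only [map_mirror_eq_iff] at h <;> simp [Move.mirror] at h <;> subst h
  · exact Or.inr (Or.inl ⟨0, n, rfl⟩)
  · rcases i with _ | i
    · rcases j with _ | j
      · exact Or.inr (Or.inr (Or.inl rfl))
      · exact (hfree.not_hasShortcut_of_prefix ⟨List.replicate j .c, rfl⟩ hasShortcut_bdc).elim
    · exact Or.inr (Or.inr (Or.inr ⟨0, i + 1, j, i.succ_pos, by simp⟩))
  · exact (hfree.not_hasShortcut_of_prefix ⟨[], rfl⟩ (hasShortcut_badcb 0 0)).elim
  · exact (hfree.not_hasShortcut_of_prefix ⟨List.replicate l .a, by simp⟩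
      (hasShortcut_badcb i j)).elim

theorem turnCount_le_two (hp : IsCanonical p) : turnCount p ≤ 2 := by
  rcases hp with ⟨n, rfl⟩ | ⟨i, j, rfl⟩ | rfl | ⟨i, j, l, hj, rfl⟩
  · simp [turnCount_replicate]
  · exact (turnCount_cba_le i j).trans one_le_two
  · simp
  · rw [turnCount_cbadc i j l hj]
    split_ifs <;> simp

theorem exists_eq_of_turnCount_eq_two (hp : IsCanonical p) (h2 : turnCount p = 2) :
    ∃ i j l, 0 < i ∧ 0 < l ∧
      p = List.replicate i .c ++ [.b] ++ List.replicate j .a ++ [.d] ++ List.replicate l .c := by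
  rcases hp with ⟨n, rfl⟩ | ⟨i, j, rfl⟩ | rfl | ⟨i, j, l, hj, rfl⟩
  · simp [turnCount_replicate] at h2
  · have := turnCount_cba_le i j
    omega
  · simp at h2
  · rw [turnCount_cbadc i j l hj] at h2
    refine ⟨i, j, l, ?_, ?_, rfl⟩ <;> split_ifs at h2 <;> omega

end IsCanonical

namespace ShortcutFree

variable {k : ℕ}

theorem isCanonical_or_mirror {p : List Move} (hp : ShortcutFree k p) :
    IsCanonical p ∨ IsCanonical (p.map Move.mirror) := by
  induction p with
  | nil => exact Or.inl (Or.inl ⟨0, rfl⟩)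
  | cons m q ih =>
    have hq := ih hp.of_cons
    have hq' : IsCanonical (q.map Move.mirror) ∨
        IsCanonical ((q.map Move.mirror).map Move.mirror) := by
      simpa using hq.symm
    cases m
    · exact Or.inr (IsCanonical.cons_c hq' hp.map_mirror)
    · exact Or.inl (IsCanonical.cons_b hq hp)
    · exact Or.inl (IsCanonical.cons_c hq hp)
    · exact Or.inr (IsCanonical.cons_b hq' hp.map_mirror)

theorem cbadc_bounds {i j l : ℕ} (hk : 0 < k) (hp : ShortcutFree k
      (List.replicate i .c ++ [.b] ++ List.replicate j .a ++ [.d] ++ List.replicate l .c)) :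
    i + l ≤ j ∧ j + 2 ≤ k :=
  ⟨not_lt.1 fun h => hp _ (List.infix_refl _) (hasShortcut_cbadc_of_lt h),
    not_lt.1 fun h => hp _ (List.infix_refl _) (hasShortcut_cbadc_of_le hk (by omega))⟩

theorem exists_eq_of_turnCount_eq_two {p : List Move} (hk : 0 < k) (hp : ShortcutFree k p)
    (hcan : IsCanonical p) (h2 : turnCount p = 2) :
    ∃ i j l : ℕ, 1 ≤ i ∧ i < j ∧ j < k - 1 ∧ 1 ≤ l ∧ l ≤ j - i ∧
      p = List.replicate i .c ++ [.b] ++ List.replicate j .a ++ [.d] ++ List.replicate l .c := by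
  obtain ⟨i, j, l, hi, hl, rfl⟩ := hcan.exists_eq_of_turnCount_eq_two h2
  obtain ⟨hijl, hjk⟩ := hp.cbadc_bounds hk
  exact ⟨i, j, l, hi, by omega, by omega, hl, by omega, rfl⟩

end ShortcutFree

/-- any shortest valid path has at most 2 turns, and if it has exactly
2 turns then it is of the form c^i b a^j d c^l or a^i d c^j b a^l with
k−1 > j > i ≥ 1 and 1 ≤ l ≤ j−i. -/
theorem at_most_two_turns (k : ℕ) (hk : 2 ≤ k) (B : Set (ZMod k)) (s t : ZMod k)
    (p : List Move) (hp : ShortestPath B s t p) :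
    turnCount p ≤ 2 ∧
    (turnCount p = 2 → ∃ i j l : ℕ, 1 ≤ i ∧ i < j ∧ j < k - 1 ∧ 1 ≤ l ∧ l ≤ j - i ∧
      (p = List.replicate i Move.c ++ [Move.b] ++ List.replicate j Move.a ++
            [Move.d] ++ List.replicate l Move.c ∨
       p = List.replicate i Move.a ++ [Move.d] ++ List.replicate j Move.c ++
            [Move.b] ++ List.replicate l Move.a)) := by
  have hfree := hp.shortcutFree
  have hk₀ : 0 < k := by omega
  rcases hfree.isCanonical_or_mirror with hcan | hcan
  · refine ⟨hcan.turnCount_le_two, fun h2 => ?_⟩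
    obtain ⟨i, j, l, hi, hij, hjk, hl, hlij, hF⟩ := hfree.exists_eq_of_turnCount_eq_two hk₀ hcan h2
    exact ⟨i, j, l, hi, hij, hjk, hl, hlij, Or.inl hF⟩
  · rw [← turnCount_map_mirror]
    refine ⟨hcan.turnCount_le_two, fun h2 => ?_⟩
    obtain ⟨i, j, l, hi, hij, hjk, hl, hlij, hF⟩ :=
      hfree.map_mirror.exists_eq_of_turnCount_eq_two hk₀ hcan h2
    rw [map_mirror_eq_iff] at hF
    exact ⟨i, j, l, hi, hij, hjk, hl, hlij, Or.inr (by simpa [Move.mirror] using hF)⟩
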